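/- arXiv:1901.11501 — 4 statements merged into one kernel-verified Lean document; each statement's English description precedes it below -/
import Mathlib

section
/- Let R be a discrete valuation ring with maximal ideal 𝔪 and finite residue field of cardinality q. For j ≥ 1 let V^j = {g ∈ GL₂(R) : g₁₁ − 1 ∈ 𝔪^{⌈j/2⌉}, g₂₂ − 1 ∈ 𝔪^{⌈j/2⌉}, g₁₂ ∈ 𝔪^{⌊j/2⌋}, g₂₁ ∈ 𝔪^{⌊j/2⌋+1}} (equivalently, V^j = 1 + (rad 𝒥)^j where 𝒥 is the Iwahori order). Then for every integer i ≥ 1, V^i is a subgroup of V¹ of index q^{2(i−1)}. -/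
/-!
For `j = 2m` the map `g ↦ (g₁₁ - 1, g₂₂ - 1) mod 𝔪^(m+1)`, and for `j = 2m + 1` the map
`g ↦ (g₁₂ mod 𝔪^(m+1), g₂₁ mod 𝔪^(m+2))`, is a homomorphism from `Vʲ` to an additive group:
the error terms in the entries of a product lie one power of `𝔪` deeper. Its kernel is `Vʲ⁺¹`
and its image is a product of two layers `𝔪ᵃ/𝔪ᵃ⁺¹`, each of order `q` since `𝔪` is principal.
Hence `[Vʲ : Vʲ⁺¹] = q²`, and the index `[V¹ : Vⁱ]` telescopes.
-/

open IsLocalRing Matrix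

/-- The set `Vʲ = 1 + (rad 𝒥)ʲ` in `GL₂(R)`, where `𝒥` is the Iwahori order:
matrices `g` with `g₁₁ - 1, g₂₂ - 1 ∈ 𝔪^⌈j/2⌉`, `g₁₂ ∈ 𝔪^⌊j/2⌋` and `g₂₁ ∈ 𝔪^(⌊j/2⌋+1)`. -/
def iwahoriFiltration (R : Type*) [CommRing R] [IsLocalRing R] (j : ℕ) :
    Set (GL (Fin 2) R) :=
  {g : GL (Fin 2) R |
    (g : Matrix (Fin 2) (Fin 2) R) 0 0 - 1 ∈ maximalIdeal R ^ ((j + 1) / 2) ∧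
    (g : Matrix (Fin 2) (Fin 2) R) 1 1 - 1 ∈ maximalIdeal R ^ ((j + 1) / 2) ∧
    (g : Matrix (Fin 2) (Fin 2) R) 0 1 ∈ maximalIdeal R ^ (j / 2) ∧
    (g : Matrix (Fin 2) (Fin 2) R) 1 0 ∈ maximalIdeal R ^ (j / 2 + 1)}

theorem Subgroup.relIndex_eq_card_range {G A : Type*} [Group G] [AddGroup A] {H K : Subgroup G}
    (f : K → A) (hf : ∀ a b, f (a * b) = f a + f b) (hker : ∀ g : K, f g = 0 ↔ (g : G) ∈ H) :
    H.relIndex K = Nat.card (Set.range f) := by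
  let φ : K →* Multiplicative A :=
    MonoidHom.mk' (fun g => .ofAdd (f g)) fun a b => by rw [hf, ofAdd_add]
  have hφ : H.subgroupOf K = φ.ker := by
    ext g
    rw [Subgroup.mem_subgroupOf, MonoidHom.mem_ker, MonoidHom.mk'_apply, ofAdd_eq_one, hker]
  rw [Subgroup.relIndex, hφ, Subgroup.index_ker, ← SetLike.coe_sort_coe, MonoidHom.coe_range]
  change Nat.card (Set.range (Multiplicative.ofAdd ∘ f)) = _
  rw [Set.range_comp, Nat.card_image_of_injective Multiplicative.ofAdd.injective]

theorem Ideal.Quotient.mk_eq_add_iff {R : Type*} [CommRing R] {I : Ideal R} {x y z : R} :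
    Ideal.Quotient.mk I x = Ideal.Quotient.mk I y + Ideal.Quotient.mk I z ↔ x - (y + z) ∈ I := by
  rw [← map_add, Ideal.Quotient.eq]

theorem Ideal.pow_mul_pow_le_pow {R : Type*} [CommSemiring R] (I : Ideal R) {a b c : ℕ}
    (h : c ≤ a + b) : I ^ a * I ^ b ≤ I ^ c := by
  rw [← pow_add]
  exact Ideal.pow_le_pow_right h

section GLTwo

variable {R : Type*} [CommRing R]

theorem glTwo_mul_apply (g h : GL (Fin 2) R) (r s : Fin 2) :
    (g * h).1 r s = g.1 r 0 * h.1 0 s + g.1 r 1 * h.1 1 s := by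
  rw [Units.val_mul, mul_apply, Fin.sum_univ_two]

theorem glTwo_inv_val (g : GL (Fin 2) R) :
    g⁻¹.1 = Ring.inverse g.1.det • !![g.1 1 1, -g.1 0 1; -g.1 1 0, g.1 0 0] := by
  rw [← adjugate_fin_two, ← inv_def, ← coe_units_inv]

theorem glTwo_inverse_det_mul (g : GL (Fin 2) R) :
    Ring.inverse g.1.det * (g.1 0 0 * g.1 1 1 - g.1 0 1 * g.1 1 0) = 1 := by
  rw [← det_fin_two]
  exact Ring.inverse_mul_cancel _ ((isUnit_iff_isUnit_det _).mp g.isUnit)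

def glTwoCongruence (I J K : Ideal R) (hJK : J * K ≤ I) : Subgroup (GL (Fin 2) R) where
  carrier := {g | g.1 0 0 - 1 ∈ I ∧ g.1 1 1 - 1 ∈ I ∧ g.1 0 1 ∈ J ∧ g.1 1 0 ∈ K}
  one_mem' := by simp
  mul_mem' := by
    rintro a b ⟨ha₀₀, ha₁₁, ha₀₁, ha₁₀⟩ ⟨hb₀₀, hb₁₁, hb₀₁, hb₁₀⟩
    simp only [Set.mem_ofPred_eq, glTwo_mul_apply]
    refine ⟨?_, ?_, ?_, ?_⟩
    · rw [show a.1 0 0 * b.1 0 0 + a.1 0 1 * b.1 1 0 - 1 =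
          (a.1 0 0 - 1) * b.1 0 0 + (b.1 0 0 - 1) + a.1 0 1 * b.1 1 0 by ring]
      exact add_mem (add_mem (I.mul_mem_right _ ha₀₀) hb₀₀) (hJK (Ideal.mul_mem_mul ha₀₁ hb₁₀))
    · rw [show a.1 1 0 * b.1 0 1 + a.1 1 1 * b.1 1 1 - 1 =
          (a.1 1 1 - 1) * b.1 1 1 + (b.1 1 1 - 1) + b.1 0 1 * a.1 1 0 by ring]
      exact add_mem (add_mem (I.mul_mem_right _ ha₁₁) hb₁₁) (hJK (Ideal.mul_mem_mul hb₀₁ ha₁₀))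
    · exact add_mem (J.mul_mem_left _ hb₀₁) (J.mul_mem_right _ ha₀₁)
    · exact add_mem (K.mul_mem_right _ ha₁₀) (K.mul_mem_left _ hb₁₀)
  inv_mem' := by
    rintro g ⟨h₀₀, h₁₁, h₀₁, h₁₀⟩
    have hdet := glTwo_inverse_det_mul g
    simp only [Set.mem_ofPred_eq, glTwo_inv_val, Matrix.smul_apply, of_apply, cons_val',
      cons_val_zero, cons_val_one, cons_val_fin_one, smul_eq_mul, mul_neg, neg_mem_iff]
    generalize Ring.inverse g.1.det = u at hdet ⊢
    refine ⟨?_, ?_, ?_, ?_⟩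
    · rw [show u * g.1 1 1 - 1 = u * (g.1 0 1 * g.1 1 0 - (g.1 0 0 - 1) * g.1 1 1) by
        linear_combination hdet]
      exact I.mul_mem_left _ (sub_mem (hJK (Ideal.mul_mem_mul h₀₁ h₁₀)) (I.mul_mem_right _ h₀₀))
    · rw [show u * g.1 0 0 - 1 = u * (g.1 0 1 * g.1 1 0 - (g.1 1 1 - 1) * g.1 0 0) by
        linear_combination hdet]
      exact I.mul_mem_left _ (sub_mem (hJK (Ideal.mul_mem_mul h₀₁ h₁₀)) (I.mul_mem_right _ h₁₁))
    · exact J.mul_mem_left _ h₀₁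
    · exact K.mul_mem_left _ h₁₀

theorem exists_glTwo_val_eq {A : Matrix (Fin 2) (Fin 2) R}
    (h : IsUnit (A 0 0 * A 1 1 - A 0 1 * A 1 0)) : ∃ g : GL (Fin 2) R, g.1 = A :=
  ⟨nonsingInvUnit A (by rwa [det_fin_two]), rfl⟩

theorem mem_glTwoCongruence {I J K : Ideal R} {hJK : J * K ≤ I} {g : GL (Fin 2) R} :
    g ∈ glTwoCongruence I J K hJK ↔
      g.1 0 0 - 1 ∈ I ∧ g.1 1 1 - 1 ∈ I ∧ g.1 0 1 ∈ J ∧ g.1 1 0 ∈ K :=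
  Iff.rfl

variable {I I' J J' K K' : Ideal R}

theorem relIndex_glTwoCongruence_diag (hI : I ≤ Ideal.jacobson ⊥) (hII : I * I ≤ I')
    (hJK : J * K ≤ I) (hJK' : J * K ≤ I') :
    (glTwoCongruence I' J K hJK').relIndex (glTwoCongruence I J K hJK) =
      Nat.card (I.map (Ideal.Quotient.mk I')) ^ 2 := by
  let f (g : glTwoCongruence I J K hJK) : (R ⧸ I') × (R ⧸ I') :=
    (Ideal.Quotient.mk I' (g.1.1 0 0 - 1), Ideal.Quotient.mk I' (g.1.1 1 1 - 1))
  have hf (a b) : f (a * b) = f a + f b := by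
    obtain ⟨ha₀₀, ha₁₁, ha₀₁, ha₁₀⟩ := a.2
    obtain ⟨hb₀₀, hb₁₁, hb₀₁, hb₁₀⟩ := b.2
    simp only [f, Subgroup.coe_mul, glTwo_mul_apply, Prod.mk_add_mk, Prod.mk.injEq,
      Ideal.Quotient.mk_eq_add_iff]
    constructor
    · rw [show _ - (a.1.1 0 0 - 1 + (b.1.1 0 0 - 1)) =
          (a.1.1 0 0 - 1) * (b.1.1 0 0 - 1) + a.1.1 0 1 * b.1.1 1 0 by ring]
      exact add_mem (hII (Ideal.mul_mem_mul ha₀₀ hb₀₀)) (hJK' (Ideal.mul_mem_mul ha₀₁ hb₁₀))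
    · rw [show _ - (a.1.1 1 1 - 1 + (b.1.1 1 1 - 1)) =
          (a.1.1 1 1 - 1) * (b.1.1 1 1 - 1) + b.1.1 0 1 * a.1.1 1 0 by ring]
      exact add_mem (hII (Ideal.mul_mem_mul ha₁₁ hb₁₁)) (hJK' (Ideal.mul_mem_mul hb₀₁ ha₁₀))
  have hker (g) : f g = 0 ↔ g.1 ∈ glTwoCongruence I' J K hJK' := by
    simp only [f, Prod.mk_eq_zero, Ideal.Quotient.eq_zero_iff_mem, mem_glTwoCongruence]
    exact ⟨fun h => ⟨h.1, h.2, g.2.2.2⟩, fun h => ⟨h.1, h.2.1⟩⟩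
  have hrange : Set.range f = (I.map (Ideal.Quotient.mk I') : Set (R ⧸ I')) ×ˢ
      (I.map (Ideal.Quotient.mk I') : Set (R ⧸ I')) := by
    ext ⟨a, b⟩
    constructor
    · rintro ⟨g, hg⟩
      rw [← hg]
      exact ⟨Ideal.mem_map_of_mem _ g.2.1, Ideal.mem_map_of_mem _ g.2.2.1⟩
    · rintro ⟨ha, hb⟩
      obtain ⟨x, hx, rfl⟩ := (Ideal.mem_map_iff_of_surjective _ Ideal.Quotient.mk_surjective).mp ha
      obtain ⟨z, hz, rfl⟩ := (Ideal.mem_map_iff_of_surjective _ Ideal.Quotient.mk_surjective).mp hb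
      have hunit := (Ideal.mem_jacobson_bot.mp (hI hx) 1).mul (Ideal.mem_jacobson_bot.mp (hI hz) 1)
      obtain ⟨g, hg⟩ := exists_glTwo_val_eq (A := !![1 + x, 0; 0, 1 + z])
        (by simpa [add_comm] using hunit)
      refine ⟨⟨g, ?_⟩, ?_⟩
      · simp [mem_glTwoCongruence, hg, hx, hz]
      · simp [f, hg]
  rw [Subgroup.relIndex_eq_card_range f hf hker, hrange, Nat.card_congr (Equiv.Set.prod _ _),
    Nat.card_prod, sq]
  rfl

theorem relIndex_glTwoCongruence_offDiag (hI : I ≤ Ideal.jacobson ⊥) (hIJ : I * J ≤ J')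
    (hIK : I * K ≤ K') (hJK : J * K ≤ I) (hJK' : J' * K' ≤ I) :
    (glTwoCongruence I J' K' hJK').relIndex (glTwoCongruence I J K hJK) =
      Nat.card (J.map (Ideal.Quotient.mk J')) * Nat.card (K.map (Ideal.Quotient.mk K')) := by
  let f (g : glTwoCongruence I J K hJK) : (R ⧸ J') × (R ⧸ K') :=
    (Ideal.Quotient.mk J' (g.1.1 0 1), Ideal.Quotient.mk K' (g.1.1 1 0))
  have hf (a b) : f (a * b) = f a + f b := by
    obtain ⟨ha₀₀, ha₁₁, ha₀₁, ha₁₀⟩ := a.2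
    obtain ⟨hb₀₀, hb₁₁, hb₀₁, hb₁₀⟩ := b.2
    simp only [f, Subgroup.coe_mul, glTwo_mul_apply, Prod.mk_add_mk, Prod.mk.injEq,
      Ideal.Quotient.mk_eq_add_iff]
    constructor
    · rw [show _ - (a.1.1 0 1 + b.1.1 0 1) =
          (a.1.1 0 0 - 1) * b.1.1 0 1 + (b.1.1 1 1 - 1) * a.1.1 0 1 by ring]
      exact add_mem (hIJ (Ideal.mul_mem_mul ha₀₀ hb₀₁)) (hIJ (Ideal.mul_mem_mul hb₁₁ ha₀₁))
    · rw [show _ - (a.1.1 1 0 + b.1.1 1 0) =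
          (b.1.1 0 0 - 1) * a.1.1 1 0 + (a.1.1 1 1 - 1) * b.1.1 1 0 by ring]
      exact add_mem (hIK (Ideal.mul_mem_mul hb₀₀ ha₁₀)) (hIK (Ideal.mul_mem_mul ha₁₁ hb₁₀))
  have hker (g) : f g = 0 ↔ g.1 ∈ glTwoCongruence I J' K' hJK' := by
    simp only [f, Prod.mk_eq_zero, Ideal.Quotient.eq_zero_iff_mem, mem_glTwoCongruence]
    exact ⟨fun h => ⟨g.2.1, g.2.2.1, h⟩, fun h => h.2.2⟩
  have hrange : Set.range f = (J.map (Ideal.Quotient.mk J') : Set (R ⧸ J')) ×ˢ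
      (K.map (Ideal.Quotient.mk K') : Set (R ⧸ K')) := by
    ext ⟨a, b⟩
    constructor
    · rintro ⟨g, hg⟩
      rw [← hg]
      exact ⟨Ideal.mem_map_of_mem _ g.2.2.2.1, Ideal.mem_map_of_mem _ g.2.2.2.2⟩
    · rintro ⟨ha, hb⟩
      obtain ⟨x, hx, rfl⟩ := (Ideal.mem_map_iff_of_surjective _ Ideal.Quotient.mk_surjective).mp ha
      obtain ⟨z, hz, rfl⟩ := (Ideal.mem_map_iff_of_surjective _ Ideal.Quotient.mk_surjective).mp hb
      have hunit := Ideal.mem_jacobson_bot.mp (hI (hJK (Ideal.mul_mem_mul hx hz))) (-1)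
      obtain ⟨g, hg⟩ := exists_glTwo_val_eq (A := !![1, x; z, 1])
        (by simpa [add_comm, sub_eq_add_neg] using hunit)
      refine ⟨⟨g, ?_⟩, ?_⟩
      · simp [mem_glTwoCongruence, hg, hx, hz]
      · simp [f, hg]
  rw [Subgroup.relIndex_eq_card_range f hf hker, hrange, Nat.card_congr (Equiv.Set.prod _ _),
    Nat.card_prod]
  rfl

end GLTwo

theorem IsDiscreteValuationRing.card_map_maximalIdeal_pow (R : Type*) [CommRing R] [IsDomain R]
    [IsDiscreteValuationRing R] (n : ℕ) :
    Nat.card ((IsLocalRing.maximalIdeal R ^ n).map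
      (Ideal.Quotient.mk (IsLocalRing.maximalIdeal R ^ (n + 1)))) =
      Nat.card (ResidueField R) :=
  (Nat.card_congr ((Ideal.quotEquivPowQuotPowSucc (IsPrincipalIdealRing.principal _)
    (not_a_field R) n).toEquiv.trans (Ideal.powQuotPowSuccEquivMapMkPowSuccPow _ n))).symm

section Iwahori

variable (R : Type*) [CommRing R] [IsLocalRing R]

def iwahoriSubgroup (j : ℕ) : Subgroup (GL (Fin 2) R) :=
  glTwoCongruence (maximalIdeal R ^ ((j + 1) / 2)) (maximalIdeal R ^ (j / 2))
    (maximalIdeal R ^ (j / 2 + 1)) (Ideal.pow_mul_pow_le_pow _ (by omega))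

theorem coe_iwahoriSubgroup (j : ℕ) :
    (iwahoriSubgroup R j : Set (GL (Fin 2) R)) = iwahoriFiltration R j :=
  rfl

theorem iwahoriSubgroup_antitone : Antitone (iwahoriSubgroup R) :=
  fun _ _ hjk _ ⟨h₀₀, h₁₁, h₀₁, h₁₀⟩ =>
    ⟨Ideal.pow_le_pow_right (by omega) h₀₀, Ideal.pow_le_pow_right (by omega) h₁₁,
      Ideal.pow_le_pow_right (by omega) h₀₁, Ideal.pow_le_pow_right (by omega) h₁₀⟩

theorem iwahoriSubgroup_eq {j a b : ℕ} (ha : (j + 1) / 2 = a) (hb : j / 2 = b) :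
    iwahoriSubgroup R j = glTwoCongruence (maximalIdeal R ^ a) (maximalIdeal R ^ b)
      (maximalIdeal R ^ (b + 1)) (Ideal.pow_mul_pow_le_pow _ (by omega)) := by
  subst ha hb
  rfl

theorem maximalIdeal_pow_le_jacobson {n : ℕ} (hn : n ≠ 0) :
    maximalIdeal R ^ n ≤ Ideal.jacobson ⊥ :=
  (Ideal.pow_le_self hn).trans (maximalIdeal_le_jacobson _)

end Iwahori

section IwahoriDVR

variable (R : Type*) [CommRing R] [IsDomain R] [IsDiscreteValuationRing R]

theorem relIndex_iwahoriSubgroup_succ {j : ℕ} (hj : 1 ≤ j) :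
    (iwahoriSubgroup R (j + 1)).relIndex (iwahoriSubgroup R j) =
      Nat.card (ResidueField R) ^ 2 := by
  obtain ⟨m, rfl | rfl⟩ := Nat.even_or_odd' j
  · rw [iwahoriSubgroup_eq R (a := m + 1) (b := m) (by omega) (by omega),
      iwahoriSubgroup_eq R (a := m) (b := m) (by omega) (by omega),
      relIndex_glTwoCongruence_diag (maximalIdeal_pow_le_jacobson R (by omega))
        (Ideal.pow_mul_pow_le_pow _ (by omega)),
      IsDiscreteValuationRing.card_map_maximalIdeal_pow]
  · rw [iwahoriSubgroup_eq R (a := m + 1) (b := m + 1) (by omega) (by omega),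
      iwahoriSubgroup_eq R (a := m + 1) (b := m) (by omega) (by omega),
      relIndex_glTwoCongruence_offDiag (maximalIdeal_pow_le_jacobson R (by omega))
        (Ideal.pow_mul_pow_le_pow _ (by omega)) (Ideal.pow_mul_pow_le_pow _ (by omega)),
      IsDiscreteValuationRing.card_map_maximalIdeal_pow,
      IsDiscreteValuationRing.card_map_maximalIdeal_pow, sq]

theorem relIndex_iwahoriSubgroup_one {i : ℕ} (hi : 1 ≤ i) :
    (iwahoriSubgroup R i).relIndex (iwahoriSubgroup R 1) =
      Nat.card (ResidueField R) ^ (2 * (i - 1)) := by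
  induction i, hi using Nat.le_induction with
  | base => simp
  | succ n hn ih =>
    rw [← Subgroup.relIndex_mul_relIndex _ _ _ (iwahoriSubgroup_antitone R n.le_succ)
      (iwahoriSubgroup_antitone R hn), relIndex_iwahoriSubgroup_succ R hn, ih, ← pow_add]
    congr 1
    omega

end IwahoriDVR

theorem index_iwahoriFiltration_general (R : Type*) [CommRing R] [IsDomain R]
    [IsDiscreteValuationRing R]
    (q : ℕ) (hq : Nat.card (ResidueField R) = q) (i : ℕ) (hi : 1 ≤ i) :
    ∃ V1 Vi : Subgroup (GL (Fin 2) R),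
      (V1 : Set (GL (Fin 2) R)) = iwahoriFiltration R 1 ∧
      (Vi : Set (GL (Fin 2) R)) = iwahoriFiltration R i ∧
      Vi ≤ V1 ∧ (Vi.subgroupOf V1).index = q ^ (2 * (i - 1)) :=
  ⟨iwahoriSubgroup R 1, iwahoriSubgroup R i, coe_iwahoriSubgroup R 1, coe_iwahoriSubgroup R i,
    iwahoriSubgroup_antitone R hi, hq ▸ relIndex_iwahoriSubgroup_one R hi⟩

/-- Let `R` be a discrete valuation ring with finite residue field of cardinality `q`.
For every `i ≥ 1`, the set `Vⁱ = 1 + (rad 𝒥)ⁱ` is a subgroup of `V¹` of index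
`q ^ (2 * (i - 1))`. -/
theorem index_iwahoriFiltration (R : Type*) [CommRing R] [IsDomain R]
    [IsDiscreteValuationRing R] [Finite (ResidueField R)]
    (q : ℕ) (hq : Nat.card (ResidueField R) = q) (i : ℕ) (hi : 1 ≤ i) :
    ∃ V1 Vi : Subgroup (GL (Fin 2) R),
      (V1 : Set (GL (Fin 2) R)) = iwahoriFiltration R 1 ∧
      (Vi : Set (GL (Fin 2) R)) = iwahoriFiltration R i ∧
      Vi ≤ V1 ∧ (Vi.subgroupOf V1).index = q ^ (2 * (i - 1)) :=
  index_iwahoriFiltration_general R q hq i hi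
end

section
/- Let R be a discrete valuation ring with maximal ideal 𝔪 and finite residue field of odd cardinality q, and let u ∈ Rˣ be a unit whose image in the residue field is not a square. Let T = {!![a, u·b; b, a] : a, b ∈ R} ∩ GL₂(R) (the unit group of the unramified quadratic order; a matrix of this shape lies in GL₂(R) exactly when a² − u·b² ∈ Rˣ), a subgroup of GL₂(R). For j ≥ 1 let K^j = {g ∈ GL₂(R) : every entry of g − 1 lies in 𝔪^j}. Then for every i ≥ 1, the set T·K^i is a subgroup of GL₂(R) (since K^i is normal), and its index in GL₂(R) equals (q² − q)·q^{2(i−1)}. -/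
open IsLocalRing Matrix Pointwise

/-- The congruence subgroup of `GL₂(R)` attached to an ideal `I`: the invertible matrices
`g` with every entry of `g - 1` in `I`. -/
def congruenceSubgroup (R : Type*) [CommRing R] (I : Ideal R) :
    Subgroup (GL (Fin 2) R) where
  carrier := {g : GL (Fin 2) R |
    ∀ r s : Fin 2, ((g : Matrix (Fin 2) (Fin 2) R) - 1) r s ∈ I}
  one_mem' := by
    intro r s
    simp
  mul_mem' := by
    intro a b ha hb r s
    have key : ((↑(a * b) : Matrix (Fin 2) (Fin 2) R) - 1)
        = (↑a : Matrix (Fin 2) (Fin 2) R) * ((↑b : Matrix (Fin 2) (Fin 2) R) - 1)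
          + ((↑a : Matrix (Fin 2) (Fin 2) R) - 1) := by
      rw [Matrix.GeneralLinearGroup.coe_mul]
      noncomm_ring
    rw [key, Matrix.add_apply, Matrix.mul_apply]
    exact add_mem (Ideal.sum_mem _ fun k _ => Ideal.mul_mem_left _ _ (hb k s)) (ha r s)
  inv_mem' := by
    intro a ha r s
    have h : (↑(a⁻¹) : Matrix (Fin 2) (Fin 2) R) * (↑a : Matrix (Fin 2) (Fin 2) R) = 1 := by
      rw [← Matrix.GeneralLinearGroup.coe_mul, inv_mul_cancel,
        Matrix.GeneralLinearGroup.coe_one]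
    have key : ((↑(a⁻¹) : Matrix (Fin 2) (Fin 2) R) - 1)
        = -((↑(a⁻¹) : Matrix (Fin 2) (Fin 2) R)
            * ((↑a : Matrix (Fin 2) (Fin 2) R) - 1)) := by
      rw [mul_sub, h, mul_one, neg_sub]
    rw [key, Matrix.neg_apply, Matrix.mul_apply]
    exact neg_mem (Ideal.sum_mem _ fun k _ => Ideal.mul_mem_left _ _ (ha k s))

/-- The unit group of the unramified quadratic order inside `GL₂(R)`: invertible matrices
of the shape `!![a, u·b; b, a]`. -/
def unramifiedTorus (R : Type*) [CommRing R] (u : Rˣ) : Set (GL (Fin 2) R) :=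
  {g : GL (Fin 2) R |
    ∃ a b : R, (g : Matrix (Fin 2) (Fin 2) R) = !![a, (u : R) * b; b, a]}

/-!
Reduction modulo `𝔪ⁱ` maps `GL₂(R)` onto `GL₂(A)`, `A = R/𝔪ⁱ`, with kernel `Kⁱ` (lifts of
invertible matrices are invertible because `R` is local). Hence `T·Kⁱ` is the preimage of the
image `T_A` of `T`, and its index is `[GL₂(A) : T_A]`. Both groups are counted through the
reduction `A → k`, whose fibres all have `|A|/q = q^(i-1)` elements: `GL₂(A)` is the preimage
of `GL₂(k)`, and `T_A` corresponds to the preimage of the pairs `(a, b) ∈ k²` with `a² - ub²`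
a unit, which are all nonzero pairs since `u` is a nonsquare mod `𝔪`. So
`|GL₂(A)| = (q² - 1)(q² - q)·q^(4(i-1))` and `|T_A| = (q² - 1)·q^(2(i-1))`.
-/

theorem AddMonoidHom.natCard_preimage {M N : Type*} [AddGroup M] [AddGroup N] (f : M →+ N)
    (hf : Function.Surjective f) (s : Set N) :
    Nat.card (f ⁻¹' s) = Nat.card f.ker * Nat.card s := by
  let e := QuotientAddGroup.quotientKerEquivOfSurjective f hf
  have hpre : f ⁻¹' s = QuotientAddGroup.mk ⁻¹' (e ⁻¹' s) := rfl
  rw [hpre, Nat.card_congr (QuotientAddGroup.preimageMkEquivAddSubgroupProdSet _ _),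
    Nat.card_prod]
  exact congrArg _ (Nat.card_congr (e.toEquiv.subtypeEquiv fun _ => Iff.rfl))

theorem AddMonoidHom.natCard_preimage_mul_natCard {M N : Type*} [AddGroup M] [AddGroup N]
    (f : M →+ N) (hf : Function.Surjective f) (s : Set N) :
    Nat.card (f ⁻¹' s) * Nat.card N = Nat.card s * Nat.card M := by
  have hM : Nat.card M = Nat.card f.ker * Nat.card N := by
    simpa using f.natCard_preimage hf Set.univ
  rw [f.natCard_preimage hf, hM]
  ring

section Torus

variable (A : Type*) [CommRing A]

-- the pairs `(a, b)` for which `a + b√w` is a unit of `A[√w]`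
def unitNormPairs (w : A) : Set (A × A) :=
  {p | IsUnit (p.1 * p.1 - w * p.2 * p.2)}

theorem isUnit_torusMatrix_iff (w a b : A) :
    IsUnit !![a, w * b; b, a] ↔ IsUnit (a * a - w * b * b) := by
  rw [Matrix.isUnit_iff_isUnit_det, Matrix.det_fin_two_of, mul_assoc]

def unramifiedTorusSubgroup (u : Aˣ) : Subgroup (GL (Fin 2) A) where
  carrier := unramifiedTorus A u
  one_mem' := ⟨1, 0, by simp [Matrix.one_fin_two]⟩
  mul_mem' := by
    rintro g h ⟨a, b, hg⟩ ⟨c, d, hh⟩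
    refine ⟨a * c + u * (b * d), a * d + b * c, ?_⟩
    rw [Matrix.GeneralLinearGroup.coe_mul, hg, hh, Matrix.mul_fin_two]
    simp only [EmbeddingLike.apply_eq_iff_eq, Matrix.vecCons_inj, and_true]
    refine ⟨⟨?_, ?_⟩, ?_, ?_⟩ <;> ring
  inv_mem' := by
    rintro g ⟨a, b, hg⟩
    -- the inverse of `!![a, u b; b, a]` is the conjugate `!![a, -u b; -b, a]` divided by the norm
    obtain ⟨v, hv⟩ := ((isUnit_torusMatrix_iff A u a b).mp (hg ▸ g.isUnit)).exists_right_inv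
    refine ⟨a * v, -(b * v), ?_⟩
    rw [Matrix.coe_units_inv]
    refine Matrix.inv_eq_right_inv ?_
    rw [hg, Matrix.mul_fin_two, Matrix.one_fin_two]
    simp only [EmbeddingLike.apply_eq_iff_eq, Matrix.vecCons_inj, and_true]
    refine ⟨⟨?_, ?_⟩, ?_, ?_⟩
    · linear_combination hv
    · ring
    · ring
    · linear_combination hv

noncomputable def unitNormPairsEquivTorus (u : Aˣ) :
    unitNormPairs A u ≃ unramifiedTorusSubgroup A u :=
  Equiv.ofBijective
    (fun p => ⟨((isUnit_torusMatrix_iff A u p.1.1 p.1.2).mpr p.2).unit, p.1.1, p.1.2, rfl⟩)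
    ⟨fun p p' h => by
      have h' : !![p.1.1, (u : A) * p.1.2; p.1.2, p.1.1]
          = !![p'.1.1, u * p'.1.2; p'.1.2, p'.1.1] :=
        congrArg (fun g : unramifiedTorusSubgroup A u => g.1.1) h
      exact Subtype.ext (Prod.ext (congrFun (congrFun h' 0) 0) (congrFun (congrFun h' 1) 0)),
    fun ⟨g, a, b, hg⟩ => ⟨⟨(a, b), (isUnit_torusMatrix_iff A u a b).mp (hg ▸ g.isUnit)⟩,
      Subtype.ext (Units.ext hg.symm)⟩⟩

theorem coe_unitNormPairsEquivTorus (u : Aˣ) (p : unitNormPairs A u) :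
    ((unitNormPairsEquivTorus A u p : GL (Fin 2) A) : Matrix (Fin 2) (Fin 2) A)
      = !![p.1.1, u * p.1.2; p.1.2, p.1.1] :=
  rfl

end Torus

section LocalHom

variable {A B : Type*} [CommRing A] [CommRing B] (f : A →+* B) [IsLocalHom f]

theorem preimage_unitNormPairs (w : A) :
    Prod.map f f ⁻¹' unitNormPairs B (f w) = unitNormPairs A w := by
  ext ⟨a, b⟩
  simp only [unitNormPairs, Set.mem_preimage, Prod.map_apply, Set.mem_ofPred_eq]
  rw [← map_mul, ← map_mul, ← map_mul, ← map_sub, isUnit_map_iff]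

theorem isUnit_mapMatrix_iff {n : Type*} [Fintype n] [DecidableEq n] (M : Matrix n n A) :
    IsUnit (f.mapMatrix M) ↔ IsUnit M := by
  rw [Matrix.isUnit_iff_isUnit_det, Matrix.isUnit_iff_isUnit_det, ← RingHom.map_det,
    isUnit_map_iff]

end LocalHom

section GLMap

variable {A B : Type*} [CommRing A] [CommRing B] (f : A →+* B)

theorem ker_map_eq_congruenceSubgroup :
    (GeneralLinearGroup.map (n := Fin 2) f).ker = congruenceSubgroup A (RingHom.ker f) := by
  ext g
  simp only [MonoidHom.mem_ker, Units.ext_iff, ← Matrix.ext_iff, congruenceSubgroup,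
    Subgroup.mem_mk, Submonoid.mem_mk, Subsemigroup.mem_mk, Set.mem_ofPred_eq, RingHom.mem_ker,
    Matrix.sub_apply, map_sub, sub_eq_zero, GeneralLinearGroup.map_apply]
  simp [Matrix.one_apply, apply_ite f]

variable [IsLocalHom f]

theorem Matrix.GeneralLinearGroup.map_surjective_of_isLocalHom {n : Type*} [Fintype n]
    [DecidableEq n] (hf : Function.Surjective f) :
    Function.Surjective (GeneralLinearGroup.map (n := n) f) := by
  intro g
  set M : Matrix n n A := (g : Matrix n n B).map (Function.surjInv hf)
  have hM : f.mapMatrix M = g := by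
    ext i j
    exact Function.surjInv_eq hf _
  have hMunit : IsUnit M := (isUnit_mapMatrix_iff f M).mp (hM ▸ g.isUnit)
  exact ⟨hMunit.unit, Units.ext hM⟩

theorem map_unramifiedTorusSubgroup (hf : Function.Surjective f) (u : Aˣ) :
    (unramifiedTorusSubgroup A u).map (GeneralLinearGroup.map f)
      = unramifiedTorusSubgroup B (Units.map f u) := by
  ext g
  constructor
  · rintro ⟨h, ⟨a, b, hh⟩, rfl⟩
    refine ⟨f a, f b, ?_⟩
    ext i j
    fin_cases i <;> fin_cases j <;> simp [GeneralLinearGroup.map_apply, hh]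
  · rintro ⟨α, β, hg⟩
    obtain ⟨a, rfl⟩ := hf α
    obtain ⟨b, rfl⟩ := hf β
    have hdet : (a, b) ∈ unitNormPairs A u := by
      rw [← preimage_unitNormPairs f]
      exact (isUnit_torusMatrix_iff B _ _ _).mp (hg ▸ g.isUnit)
    refine ⟨_, (unitNormPairsEquivTorus A u ⟨(a, b), hdet⟩).2, ?_⟩
    ext i j
    fin_cases i <;> fin_cases j <;>
      simp [GeneralLinearGroup.map_apply, coe_unitNormPairsEquivTorus, hg]

end GLMap

section Counting

variable {A B : Type*} [CommRing A] [CommRing B] (f : A →+* B) [IsLocalHom f]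

theorem natCard_GL_mul_natCard_matrix (hf : Function.Surjective f) {n : Type*} [Fintype n]
    [DecidableEq n] :
    Nat.card (GL n A) * Nat.card (Matrix n n B) = Nat.card (GL n B) * Nat.card (Matrix n n A) := by
  have hA : Nat.card (GL n A) = Nat.card {M : Matrix n n A | IsUnit M} :=
    Nat.card_congr Submonoid.unitsTypeEquivIsUnitSubmonoid.toEquiv
  have hB : Nat.card (GL n B) = Nat.card {M : Matrix n n B | IsUnit M} :=
    Nat.card_congr Submonoid.unitsTypeEquivIsUnitSubmonoid.toEquiv
  have hsurj :
      Function.Surjective (f.mapMatrix : Matrix n n A →+* Matrix n n B).toAddMonoidHom :=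
    fun N => ⟨N.map (Function.surjInv hf), by ext i j; exact Function.surjInv_eq hf _⟩
  have hpre : (f.mapMatrix : Matrix n n A →+* Matrix n n B).toAddMonoidHom ⁻¹' {N | IsUnit N}
      = {M | IsUnit M} :=
    Set.ext (isUnit_mapMatrix_iff f)
  rw [hA, hB, ← hpre]
  exact AddMonoidHom.natCard_preimage_mul_natCard _ hsurj _

theorem natCard_unramifiedTorusSubgroup_mul_natCard_prod (hf : Function.Surjective f) (u : Aˣ) :
    Nat.card (unramifiedTorusSubgroup A u) * Nat.card (B × B)
      = Nat.card (unitNormPairs B (f u)) * Nat.card (A × A) := by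
  rw [← Nat.card_congr (unitNormPairsEquivTorus A u), ← preimage_unitNormPairs f]
  exact (f.toAddMonoidHom.prodMap f.toAddMonoidHom).natCard_preimage_mul_natCard
    (Prod.map_surjective.mpr ⟨hf, hf⟩) _

end Counting

theorem mul_self_sub_mul_mul_self_eq_zero_iff {k : Type*} [Field k] {w : k} (hw : ¬IsSquare w)
    {a b : k} : a * a - w * b * b = 0 ↔ a = 0 ∧ b = 0 := by
  refine ⟨fun h => ?_, by rintro ⟨rfl, rfl⟩; ring⟩
  obtain rfl : b = 0 := by
    by_contra hb
    exact hw ⟨a / b, by field_simp; linear_combination -h⟩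
  simpa using h

theorem natCard_unitNormPairs_of_not_isSquare {k : Type*} [Field k] [Finite k] {w : k}
    (hw : ¬IsSquare w) : Nat.card (unitNormPairs k w) = Nat.card (k × k) - 1 := by
  have hzero : unitNormPairs k w = {0}ᶜ := by
    ext ⟨a, b⟩
    simp [unitNormPairs, mul_self_sub_mul_mul_self_eq_zero_iff hw]
  rw [hzero, Nat.card_coe_set_eq, Set.ncard_compl, Set.ncard_singleton]

theorem Nat.card_matrix (m n α : Type*) [Finite m] [Finite n] :
    Nat.card (Matrix m n α) = Nat.card α ^ (Nat.card m * Nat.card n) := by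
  rw [← Nat.card_congr Matrix.of, Nat.card_fun, Nat.card_fun, ← pow_mul, mul_comm]

theorem index_unramifiedTorusSubgroup_mul_sq {A k : Type*} [CommRing A] [Finite A] [Field k]
    (f : A →+* k) [IsLocalHom f] (hf : Function.Surjective f) (u : Aˣ) (hu : ¬IsSquare (f u)) :
    (unramifiedTorusSubgroup A u).index * Nat.card k ^ 2
      = (Nat.card k ^ 2 - Nat.card k) * Nat.card A ^ 2 := by
  have : Finite k := Finite.of_surjective f hf
  have : Fintype k := Fintype.ofFinite k
  have hGLk : Nat.card (GL (Fin 2) k) = (Nat.card k ^ 2 - 1) * (Nat.card k ^ 2 - Nat.card k) := by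
    simp [Matrix.card_GL_field, Fin.prod_univ_two, Nat.card_eq_fintype_card]
  have hGL := natCard_GL_mul_natCard_matrix f hf (n := Fin 2)
  rw [Nat.card_matrix, Nat.card_matrix, Nat.card_fin, hGLk] at hGL
  have hT := natCard_unramifiedTorusSubgroup_mul_natCard_prod f hf u
  rw [natCard_unitNormPairs_of_not_isSquare hu, Nat.card_prod, Nat.card_prod, ← sq, ← sq] at hT
  have hindex := (unramifiedTorusSubgroup A u).card_mul_index
  have hq : 1 < Nat.card k := Finite.one_lt_card
  have ha : 0 < Nat.card A := Nat.card_pos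
  set q := Nat.card k
  set T := unramifiedTorusSubgroup A u
  have hpos : 0 < (q ^ 2 - 1) * Nat.card A ^ 2 :=
    Nat.mul_pos (Nat.sub_pos_of_lt (Nat.one_lt_pow two_ne_zero hq)) (pow_pos ha 2)
  refine Nat.eq_of_mul_eq_mul_right hpos ?_
  calc T.index * q ^ 2 * ((q ^ 2 - 1) * Nat.card A ^ 2)
      = (Nat.card T * T.index) * q ^ (2 * 2) := by rw [← hT]; ring
    _ = (q ^ 2 - 1) * (q ^ 2 - q) * Nat.card A ^ (2 * 2) := by rw [hindex, hGL]
    _ = (q ^ 2 - q) * Nat.card A ^ 2 * ((q ^ 2 - 1) * Nat.card A ^ 2) := by ring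

theorem IsLocalRing.nontrivial_quotient_maximalIdeal_pow_succ (R : Type*) [CommRing R]
    [IsLocalRing R] (j : ℕ) : Nontrivial (R ⧸ maximalIdeal R ^ (j + 1)) :=
  Ideal.Quotient.nontrivial_iff.mpr
    (ne_top_of_le_ne_top (maximalIdeal.isMaximal R).ne_top (Ideal.pow_le_self j.succ_ne_zero))

section DVR

variable (R : Type*) [CommRing R] [IsDomain R] [IsDiscreteValuationRing R]

theorem IsDiscreteValuationRing.natCard_quotient_maximalIdeal_pow (i : ℕ) :
    Nat.card (R ⧸ IsLocalRing.maximalIdeal R ^ i) = Nat.card (ResidueField R) ^ i := by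
  rw [← Submodule.cardQuot_apply]
  exact cardQuot_pow_of_prime (IsDiscreteValuationRing.not_a_field R)

theorem index_unramifiedTorusSubgroup_quotient_maximalIdeal_pow_succ [Finite (ResidueField R)]
    {u : Rˣ} (hu : ¬IsSquare (residue R (u : R))) (j : ℕ) :
    (unramifiedTorusSubgroup (R ⧸ maximalIdeal R ^ (j + 1))
        (Units.map (Ideal.Quotient.mk (maximalIdeal R ^ (j + 1)) : R →* _) u)).index
      = (Nat.card (ResidueField R) ^ 2 - Nat.card (ResidueField R))
          * Nat.card (ResidueField R) ^ (2 * j) := by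
  set I := maximalIdeal R ^ (j + 1)
  have := IsLocalRing.nontrivial_quotient_maximalIdeal_pow_succ R j
  have : IsLocalRing (R ⧸ I) := .of_surjective' _ Ideal.Quotient.mk_surjective
  have hIm : I ≤ maximalIdeal R := Ideal.pow_le_self j.succ_ne_zero
  let ρ : R ⧸ I →+* ResidueField R := Ideal.Quotient.factor hIm
  have hρ : Function.Surjective ρ := Ideal.Quotient.factor_surjective hIm
  have : IsLocalHom ρ := .of_surjective ρ hρ
  have hcard := IsDiscreteValuationRing.natCard_quotient_maximalIdeal_pow R (j + 1)
  have : Finite (R ⧸ I) :=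
    Nat.finite_of_card_ne_zero (by rw [hcard]; exact pow_ne_zero _ Nat.card_pos.ne')
  have hindex := index_unramifiedTorusSubgroup_mul_sq ρ hρ
    (Units.map (Ideal.Quotient.mk I : R →* R ⧸ I) u) hu
  rw [hcard] at hindex
  refine Nat.eq_of_mul_eq_mul_right (pow_pos (Nat.card_pos (α := ResidueField R)) 2) ?_
  rw [hindex]
  ring

end DVR

theorem index_unramifiedTorus_mul_congruenceSubgroup_general (R : Type*) [CommRing R] [IsDomain R]
    [IsDiscreteValuationRing R] [Finite (ResidueField R)]
    (q : ℕ) (hq : Nat.card (ResidueField R) = q)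
    (u : Rˣ) (hu : ¬IsSquare (residue R (u : R)))
    (i : ℕ) (hi : 1 ≤ i) :
    ∃ H : Subgroup (GL (Fin 2) R),
      (H : Set (GL (Fin 2) R))
        = unramifiedTorus R u * (congruenceSubgroup R (maximalIdeal R ^ i) : Set (GL (Fin 2) R)) ∧
      H.index = (q ^ 2 - q) * q ^ (2 * (i - 1)) := by
  obtain ⟨j, rfl⟩ : ∃ j, i = j + 1 := ⟨i - 1, by omega⟩
  have := IsLocalRing.nontrivial_quotient_maximalIdeal_pow_succ R j
  have : IsLocalHom (Ideal.Quotient.mk (maximalIdeal R ^ (j + 1))) :=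
    .of_surjective _ Ideal.Quotient.mk_surjective
  set π := GeneralLinearGroup.map (n := Fin 2) (Ideal.Quotient.mk (maximalIdeal R ^ (j + 1)))
  refine ⟨((unramifiedTorusSubgroup R u).map π).comap π, ?_, ?_⟩
  · rw [Subgroup.comap_map_eq, Subgroup.mul_normal, ker_map_eq_congruenceSubgroup, Ideal.mk_ker]
    rfl
  · rw [Subgroup.index_comap_of_surjective _
        (GeneralLinearGroup.map_surjective_of_isLocalHom _ Ideal.Quotient.mk_surjective),
      map_unramifiedTorusSubgroup _ Ideal.Quotient.mk_surjective,
      index_unramifiedTorusSubgroup_quotient_maximalIdeal_pow_succ R hu, hq, Nat.add_sub_cancel]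

/-- Let `R` be a discrete valuation ring with finite residue field of odd cardinality `q`,
and let `u ∈ Rˣ` reduce to a nonsquare in the residue field.  For every `i ≥ 1` the set
`T·Kⁱ` is a subgroup of `GL₂(R)`, of index `(q² − q)·q^(2(i−1))`. -/
theorem index_unramifiedTorus_mul_congruenceSubgroup (R : Type*) [CommRing R] [IsDomain R]
    [IsDiscreteValuationRing R] [Finite (ResidueField R)]
    (q : ℕ) (hq : Nat.card (ResidueField R) = q) (hodd : Odd q)
    (u : Rˣ) (hu : ¬IsSquare (residue R (u : R)))
    (i : ℕ) (hi : 1 ≤ i) :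
    ∃ H : Subgroup (GL (Fin 2) R),
      (H : Set (GL (Fin 2) R))
        = unramifiedTorus R u * (congruenceSubgroup R (maximalIdeal R ^ i) : Set (GL (Fin 2) R)) ∧
      H.index = (q ^ 2 - q) * q ^ (2 * (i - 1)) :=
  index_unramifiedTorus_mul_congruenceSubgroup_general R q hq u hu i hi
end

section
/- Let α be a type, let G = FreeGroup α be the free group on α, and let A be any representation of G on an abelian group (an object of Rep ℤ G). Then the second group cohomology H²(G, A) is zero. -/
/-!
A 2-cocycle `f` of `G` with values in `A` makes `A × G` a group under
`(a, g) * (b, h) = (a + g • b + f (g, h), g * h)`, an extension of `G` by `A`. A homomorphic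
section `g ↦ (-x g, g)` of the projection to `G` exhibits `f` as the coboundary of `x`.
Surjections onto a free group split, so over a free group every 2-cocycle is a coboundary.
-/

open CategoryTheory

theorem FreeGroup.exists_comp_eq_id_of_surjective {α E : Type*} [Group E]
    (π : E →* FreeGroup α) (hπ : Function.Surjective π) :
    ∃ σ : FreeGroup α →* E, π.comp σ = MonoidHom.id _ := by
  choose s hs using fun a => hπ (FreeGroup.of a)
  exact ⟨FreeGroup.lift s, FreeGroup.ext_hom _ _ fun a => by simp [hs]⟩

namespace groupCohomology

universe u

variable {k G : Type u} [CommRing k] [Group G] {A : Rep k G}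

namespace cocycles₂

def Extension (_ : cocycles₂ A) : Type _ := A × G

variable (f : cocycles₂ A)

noncomputable instance : Group (Extension f) where
  mul p q := (p.1 + A.ρ p.2 q.1 + f (p.2, q.2), p.2 * q.2)
  one := (-f (1, 1), 1)
  inv p := (-f (1, 1) - f (p.2⁻¹, p.2) - A.ρ p.2⁻¹ p.1, p.2⁻¹)
  mul_assoc p q r := by
    have hf := (mem_cocycles₂_iff (f : G × G → A)).1 f.2 p.2 q.2 r.2
    refine Prod.ext ?_ (mul_assoc p.2 q.2 r.2)
    show p.1 + A.ρ p.2 q.1 + f (p.2, q.2) + A.ρ (p.2 * q.2) r.1 + f (p.2 * q.2, r.2)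
      = p.1 + A.ρ p.2 (q.1 + A.ρ q.2 r.1 + f (q.2, r.2)) + f (p.2, q.2 * r.2)
    rw [eq_sub_of_add_eq hf, map_mul, Module.End.mul_apply, map_add, map_add]
    abel
  one_mul p := by
    refine Prod.ext ?_ (one_mul p.2)
    show -f (1, 1) + A.ρ 1 p.1 + f (1, p.2) = p.1
    rw [cocycles₂_map_one_fst f p.2, map_one, Module.End.one_apply]
    abel
  mul_one p := by
    refine Prod.ext ?_ (mul_one p.2)
    show p.1 + A.ρ p.2 (-f (1, 1)) + f (p.2, 1) = p.1
    rw [cocycles₂_map_one_snd f p.2, map_neg]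
    abel
  inv_mul_cancel p := by
    refine Prod.ext ?_ (inv_mul_cancel p.2)
    show -f (1, 1) - f (p.2⁻¹, p.2) - A.ρ p.2⁻¹ p.1 + A.ρ p.2⁻¹ p.1 + f (p.2⁻¹, p.2)
      = -f (1, 1)
    abel

theorem Extension.mul_fst (p q : Extension f) :
    (p * q).1 = p.1 + A.ρ p.2 q.1 + f (p.2, q.2) := rfl

def Extension.snd : Extension f →* G where
  toFun := Prod.snd
  map_one' := rfl
  map_mul' _ _ := rfl

theorem Extension.snd_surjective : Function.Surjective (Extension.snd f) :=
  fun g => ⟨(0, g), rfl⟩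

end cocycles₂

theorem mem_coboundaries₂_of_comp_eq_id (f : cocycles₂ A) (σ : G →* cocycles₂.Extension f)
    (hσ : (cocycles₂.Extension.snd f).comp σ = MonoidHom.id G) :
    ⇑f ∈ coboundaries₂ A := by
  have hσ_snd (g : G) : (σ g).2 = g := DFunLike.congr_fun hσ g
  refine ⟨fun g => -(σ g).1, funext fun ⟨g, h⟩ => ?_⟩
  have hσ_mul := congrArg Prod.fst (map_mul σ g h)
  rw [cocycles₂.Extension.mul_fst, hσ_snd, hσ_snd] at hσ_mul
  show A.ρ g (-(σ h).1) - -(σ (g * h)).1 + -(σ g).1 = f (g, h)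
  rw [hσ_mul, map_neg]
  abel

theorem isZero_H2_of_forall_mem_coboundaries₂ (h : ∀ f : cocycles₂ A, ⇑f ∈ coboundaries₂ A) :
    Limits.IsZero (H2 A) := by
  have : Subsingleton (H2 A) := subsingleton_of_forall_eq 0 fun x =>
    H2_induction_on x fun f => (H2π_eq_zero_iff f).2 (h f)
  exact ModuleCat.isZero_of_subsingleton _

end groupCohomology

/-- The second group cohomology of a free group vanishes with arbitrary coefficients:
for any representation `A` of `FreeGroup α` on an abelian group, `H²(FreeGroup α, A) = 0`. -/
theorem groupCohomology_two_freeGroup_isZero (α : Type) (A : Rep ℤ (FreeGroup α)) :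
    Limits.IsZero (groupCohomology A 2) := by
  refine groupCohomology.isZero_H2_of_forall_mem_coboundaries₂ fun f => ?_
  obtain ⟨σ, hσ⟩ := FreeGroup.exists_comp_eq_id_of_surjective _
    (groupCohomology.cocycles₂.Extension.snd_surjective f)
  exact groupCohomology.mem_coboundaries₂_of_comp_eq_id f σ hσ
end

section
/- Let α be a type with at least two elements and let G = FreeGroup α be the free group on α. Then every nontrivial conjugacy class of G is infinite: for every g ∈ G with g ≠ 1, the set {x ∈ G : x is conjugate to g} is infinite. -/
/-!
Write `g` as a nonempty reduced word `w`. Pick a letter `x` whose generator differs from that of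
the last letter of `w` and whose sign agrees with that of the first letter. Then `x` cannot cancel
against the start of `w`, nor `x⁻¹` against its end, so `xⁿ w x⁻ⁿ` is reduced of length
`2n + |w|`: these conjugates of `g` are pairwise distinct.
-/

open List

namespace FreeGroup

variable {α : Type*} {w : List (α × Bool)} {x : α × Bool}

theorem isReduced_replicate (n : ℕ) (x : α × Bool) : IsReduced (replicate n x) :=
  isChain_replicate_of_rel n fun _ => rfl

theorem invRev_replicate (n : ℕ) (x : α × Bool) :
    invRev (replicate n x) = replicate n (x.1, !x.2) := by
  simp [invRev]

theorem IsReduced.replicate_append (hw : IsReduced w)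
    (hx : ∀ b ∈ w.head?, x.1 = b.1 → x.2 = b.2) (n : ℕ) :
    IsReduced (replicate n x ++ w) := by
  refine (isReduced_replicate n x).append hw fun a ha => ?_
  obtain rfl := eq_of_mem_replicate (mem_of_mem_getLast? ha)
  exact hx

theorem IsReduced.append_replicate (hw : IsReduced w)
    (hx : ∀ a ∈ w.getLast?, a.1 = x.1 → a.2 = x.2) (n : ℕ) :
    IsReduced (w ++ replicate n x) := by
  refine hw.append (isReduced_replicate n x) fun a ha b hb => ?_
  obtain rfl := eq_of_mem_replicate (mem_of_mem_head? hb)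
  exact hx a ha

theorem exists_isReduced_replicate_append_append_invRev [Nontrivial α] (hw : IsReduced w)
    (hne : w ≠ []) :
    ∃ x : α × Bool, ∀ n, IsReduced (replicate n x ++ w ++ invRev (replicate n x)) := by
  obtain ⟨c, hc⟩ := exists_ne (w.getLast hne).1
  refine ⟨(c, (w.head hne).2), fun n => ?_⟩
  rw [invRev_replicate]
  refine (hw.replicate_append ?_ n).append_overlap (hw.append_replicate ?_ n) hne
  · simp [head?_eq_some_head hne]
  · rw [getLast?_eq_some_getLast hne]
    rintro _ ⟨⟩ h
    exact absurd h.symm hc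

theorem toWord_conj_of_isReduced [DecidableEq α] {u : List (α × Bool)} {g : FreeGroup α}
    (h : IsReduced (u ++ g.toWord ++ invRev u)) :
    (mk u * g * (mk u)⁻¹).toWord = u ++ g.toWord ++ invRev u := by
  conv_lhs => rw [inv_mk, ← mk_toWord (x := g), mul_mk, mul_mk, toWord_mk, h.reduce_eq]

end FreeGroup

open FreeGroup

/-- Let `α` have at least two elements.  Then every nontrivial conjugacy class of the free
group on `α` is infinite: for `g ≠ 1`, the set of elements conjugate to `g` is infinite. -/
theorem freeGroup_conjugacyClass_infinite (α : Type*) [Nontrivial α]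
    (g : FreeGroup α) (hg : g ≠ 1) :
    {x : FreeGroup α | IsConj g x}.Infinite := by
  classical
  obtain ⟨x, hx⟩ := exists_isReduced_replicate_append_append_invRev isReduced_toWord
    (mt toWord_eq_nil_iff.1 hg)
  let conj (n : ℕ) : FreeGroup α := mk (replicate n x) * g * (mk (replicate n x))⁻¹
  have length_toWord_conj (n : ℕ) : (conj n).toWord.length = 2 * n + g.toWord.length := by
    simp only [conj, toWord_conj_of_isReduced (hx n), length_append, invRev_length,
      length_replicate]
    omega
  refine Set.infinite_of_injective_forall_mem (f := conj) (fun m n hmn => ?_)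
    fun n => isConj_iff.2 ⟨_, rfl⟩
  have := length_toWord_conj m
  rw [hmn, length_toWord_conj n] at this
  omega
end
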